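/- arXiv:2205.11586 — 7 statements merged into one kernel-verified Lean document; each statement's English description precedes it below -/
import Mathlib

section
/- Let (x_n) and (y_n) be bounded sequences in 𝕂. Then there exists a free ultrafilter 𝒰 on ℕ with lim_𝒰 x_n = x₀ and lim_𝒰 y_n = y₀ if and only if there exists a strictly increasing sequence (n_k) in ℕ such that x_{n_k} → x₀ and y_{n_k} → y₀ as k → ∞. -/
open Filter

theorem ultrafilter_limit_pair_iff_subseq_limit {𝕂 : Type*} [RCLike 𝕂]
    (x y : ℕ → 𝕂) (hx : Bornology.IsBounded (Set.range x))
    (hy : Bornology.IsBounded (Set.range y)) (x₀ y₀ : 𝕂) :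
    (∃ 𝒰 : Ultrafilter ℕ, (∀ s : Set ℕ, s.Finite → s ∉ 𝒰) ∧
        Tendsto x (𝒰 : Filter ℕ) (nhds x₀) ∧ Tendsto y (𝒰 : Filter ℕ) (nhds y₀)) ↔
      ∃ φ : ℕ → ℕ, StrictMono φ ∧
        Tendsto (x ∘ φ) atTop (nhds x₀) ∧ Tendsto (y ∘ φ) atTop (nhds y₀) := by
  constructor
  · rintro ⟨𝒰, hfree, hxt, hyt⟩
    have hle : (𝒰 : Filter ℕ) ≤ atTop := by
      rw [← Nat.cofinite_eq_atTop]
      intro t ht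
      have : tᶜ ∉ 𝒰 := hfree _ ht
      simpa using (Ultrafilter.compl_notMem_iff.mp this)
    have hcluster : MapClusterPt (x₀, y₀) atTop (fun n => (x n, y n)) := by
      refine ClusterPt.mono ?_ (map_mono hle)
      have hmap : Tendsto (fun n => (x n, y n)) (𝒰 : Filter ℕ) (nhds (x₀, y₀)) :=
        hxt.prodMk_nhds hyt
      exact ClusterPt.of_le_nhds' hmap (Ultrafilter.map _ 𝒰).neBot
    obtain ⟨ψ, hψ, hten⟩ := TopologicalSpace.FirstCountableTopology.tendsto_subseq hcluster
    refine ⟨ψ, hψ, ?_, ?_⟩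
    · exact (continuous_fst.tendsto _).comp hten
    · exact (continuous_snd.tendsto _).comp hten
  · rintro ⟨φ, hφ, hxt, hyt⟩
    set F := Filter.map φ atTop with hF
    have hFb : F.NeBot := map_neBot
    refine ⟨Ultrafilter.of F, ?_, ?_, ?_⟩
    · intro s hs hmem
      have hle : (Ultrafilter.of F : Filter ℕ) ≤ cofinite := by
        refine le_trans (Ultrafilter.of_le F) ?_
        rw [Nat.cofinite_eq_atTop]
        exact tendsto_map' hφ.tendsto_atTop
      have : sᶜ ∈ (Ultrafilter.of F : Filter ℕ) := hle hs.compl_mem_cofinite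
      have := inter_mem hmem this
      simp at this
    · have hxt' : Tendsto x F (nhds x₀) := by rw [hF, tendsto_map'_iff]; exact hxt
      exact hxt'.mono_left (Ultrafilter.of_le F)
    · have hyt' : Tendsto y F (nhds y₀) := by rw [hF, tendsto_map'_iff]; exact hyt
      exact hyt'.mono_left (Ultrafilter.of_le F)
end

section
/- Let x = (x_n) and y = (y_n) be elements of ℓ∞ over 𝕂. Then x ⊥_B y if and only if 0 lies in the convex hull of the set { lim_𝒰 conj(x_n) y_n : 𝒰 an ultrafilter on ℕ with lim_𝒰 |x_n| = ‖x‖ }. -/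
/-! Write `w n = conj (x n) * y n`. The set in the statement is the compact set `S` of cluster
points of `w` along the filter of indices on which `‖x n‖ → ‖x‖`.

If `z ∈ S` and `0 ≤ re (λ z)`, then passing to the limit in
`‖x n‖ ^ 2 + re (λ w n) = re (conj (x n) * (x n + λ y n)) ≤ ‖x‖ ‖x + λ y‖`
gives `‖x‖ ≤ ‖x + λ y‖`; such a `z` exists for every `λ` as soon as `0 ∈ conv S`.

Conversely, if `0 ∉ conv S`, Hahn–Banach gives `c` with `re (c z) < u < 0` on `S`, hence
`re (c w n) < u` whenever `‖x n‖ > ‖x‖ - δ`. For small `t > 0` the vector `x + t c y` is then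
shorter than `x`: on these coordinates the first-order term `2 t re (c w n)` is negative, and on
the others `‖x n‖ ≤ ‖x‖ - δ` leaves room for the perturbation. -/

open Filter ENNReal Topology ComplexConjugate RCLike

lemma isCompact_convexHull {E : Type*} [AddCommGroup E] [Module ℝ E] [TopologicalSpace E]
    [IsTopologicalAddGroup E] [ContinuousSMul ℝ E] [FiniteDimensional ℝ E] {s : Set E}
    (hs : IsCompact s) : IsCompact (convexHull ℝ s) := by
  -- By Carathéodory, a point of the hull is a convex combination of `≤ finrank ℝ E + 1` points.
  let comb (k : ℕ) (p : (Fin k → ℝ) × (Fin k → E)) : E := ∑ i, p.1 i • p.2 i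
  have hcomb : convexHull ℝ s = ⋃ k : Fin (Module.finrank ℝ E + 2),
      comb k '' (stdSimplex ℝ (Fin k) ×ˢ Set.univ.pi fun _ => s) := by
    apply Set.Subset.antisymm
    · intro v hv
      obtain ⟨ι, _, z, w, hzs, hz, hw0, hw1, rfl⟩ := eq_pos_convex_span_of_mem_convexHull hv
      have hcard : Fintype.card ι < Module.finrank ℝ E + 2 :=
        Nat.lt_succ_of_le (hz.card_le_finrank_succ.trans (by gcongr; exact Submodule.finrank_le _))
      let e := Fintype.equivFin ι
      refine Set.mem_iUnion.2 ⟨⟨_, hcard⟩, (w ∘ e.symm, z ∘ e.symm),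
        ⟨⟨fun i => (hw0 _).le, ?_⟩, fun i _ => hzs ⟨_, rfl⟩⟩, e.symm.sum_comp fun i => w i • z i⟩
      simpa [e.symm.sum_comp] using hw1
    · simp only [Set.iUnion_subset_iff]
      rintro k _ ⟨⟨w, z⟩, ⟨⟨hw0, hw1⟩, hz⟩, rfl⟩
      exact (convex_convexHull ℝ s).sum_mem (fun i _ => hw0 i) hw1
        fun i _ => subset_convexHull ℝ s (hz i trivial)
  rw [hcomb]
  exact isCompact_iUnion fun k =>
    ((isCompact_stdSimplex ℝ _).prod (isCompact_univ_pi fun _ => hs)).image (by fun_prop)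

section RCLike
variable {𝕂 : Type*} [RCLike 𝕂]

lemma RCLike.exists_re_mul_lt_of_zero_notMem_convexHull {S : Set 𝕂} (hS : IsCompact S)
    (h0 : (0 : 𝕂) ∉ convexHull ℝ S) : ∃ c : 𝕂, ∃ u < 0, ∀ z ∈ S, re (c * z) < u := by
  obtain ⟨f, u, hf, hu⟩ := RCLike.geometric_hahn_banach_closed_point (𝕜 := 𝕂)
    (convex_convexHull ℝ S) (isCompact_convexHull hS).isClosed h0
  refine ⟨f 1, u, by simpa using hu, fun z hz => ?_⟩
  rw [mul_comm, ← smul_eq_mul, ← map_smul, smul_eq_mul, mul_one]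
  exact hf z (subset_convexHull ℝ S hz)

lemma RCLike.exists_re_mul_nonneg_of_zero_mem_convexHull {S : Set 𝕂}
    (h0 : (0 : 𝕂) ∈ convexHull ℝ S) (c : 𝕂) : ∃ z ∈ S, 0 ≤ re (c * z) := by
  by_contra! hS
  have hconv : Convex ℝ {z : 𝕂 | re (c * z) < 0} :=
    convex_halfSpace_lt (reLm.comp (LinearMap.mulLeft ℝ c)).isLinear 0
  have h : re (c * 0) < 0 := convexHull_min hS hconv h0
  simp at h

lemma RCLike.sq_norm_add_re_mul_le (a b c : 𝕂) :
    ‖a‖ ^ 2 + re (c * (conj a * b)) ≤ ‖a‖ * ‖a + c * b‖ :=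
  calc ‖a‖ ^ 2 + re (c * (conj a * b)) = re (conj a * (a + c * b)) := by
        rw [mul_add, map_add, conj_mul, ← ofReal_pow, ofReal_re, mul_left_comm]
    _ ≤ ‖a‖ * ‖a + c * b‖ := by
        simpa only [norm_mul, norm_conj] using re_le_norm (conj a * (a + c * b))

lemma RCLike.sq_norm_add_real_mul (a b c : 𝕂) (t : ℝ) :
    ‖a + t * c * b‖ ^ 2 = ‖a‖ ^ 2 + 2 * t * re (c * (conj a * b)) + t ^ 2 * ‖c * b‖ ^ 2 := by
  rw [norm_add_sq (𝕜 := 𝕂), inner_apply,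
    show (t : 𝕂) * c * b * conj a = t * (c * (conj a * b)) by ring, re_ofReal_mul,
    mul_assoc, norm_mul, norm_ofReal, mul_pow, sq_abs]
  ring

end RCLike

lemma setOf_exists_ultrafilter_tendsto_eq {ι X Y : Type*} [TopologicalSpace X]
    [TopologicalSpace Y] (g : ι → Y) (a : Y) (w : ι → X) :
    {z | ∃ U : Ultrafilter ι, Tendsto g U (𝓝 a) ∧ Tendsto w U (𝓝 z)} =
      {z | MapClusterPt z (comap g (𝓝 a)) w} := by
  ext z
  simp only [Set.mem_ofPred_eq, mapClusterPt_iff_ultrafilter, tendsto_iff_comap]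

section Topology
variable {ι X : Type*} [TopologicalSpace X] {F : Filter ι} {w : ι → X} {K : Set X}

lemma IsCompact.isCompact_setOf_mapClusterPt [T2Space X] (hK : IsCompact K)
    (hw : ∀ᶠ i in F, w i ∈ K) : IsCompact {z | MapClusterPt z F w} :=
  hK.of_isClosed_subset isClosed_setOfPred_clusterPt fun _ hz =>
    hK.isClosed.closure_eq ▸ hz.mem_closure_of_mem K hw

lemma IsCompact.eventually_mem_of_forall_mapClusterPt {V : Set X} (hK : IsCompact K)
    (hw : ∀ᶠ i in F, w i ∈ K) (hV : IsOpen V) (h : ∀ z, MapClusterPt z F w → z ∈ V) :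
    ∀ᶠ i in F, w i ∈ V :=
  hK.tendsto_nhdsSet_of_mapClusterPt hw (fun z _ hz => h z hz) (hV.mem_nhdsSet.2 subset_rfl)

end Topology

lemma exists_pos_forall_of_eventually_comap_nhds {ι : Type*} {g : ι → ℝ} {a : ℝ} {P : ι → Prop}
    (hg : ∀ i, g i ≤ a) (h : ∀ᶠ i in comap g (𝓝 a), P i) : ∃ δ > 0, ∀ i, a - δ < g i → P i := by
  obtain ⟨δ, hδ, hP⟩ := Metric.eventually_nhds_iff.1 (eventually_comap.1 h)
  refine ⟨δ, hδ, fun i hi => hP ?_ i rfl⟩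
  rw [Real.dist_eq, abs_sub_lt_iff]
  constructor <;> linarith [hg i]

namespace lp
variable {ι 𝕂 : Type*} [RCLike 𝕂]

local notation "ℓ∞" => lp (fun _ : ι => 𝕂) ∞

lemma norm_le_norm_add_smul_of_tendsto {F : Filter ι} [F.NeBot] {x y : ℓ∞} {z lam : 𝕂}
    (hx : Tendsto (fun n => ‖x n‖) F (𝓝 ‖x‖)) (hz : Tendsto (fun n => conj (x n) * y n) F (𝓝 z))
    (hre : 0 ≤ re (lam * z)) : ‖x‖ ≤ ‖x + lam • y‖ := by
  have hpt n : ‖x n‖ ^ 2 + re (lam * (conj (x n) * y n)) ≤ ‖x‖ * ‖x + lam • y‖ :=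
    (sq_norm_add_re_mul_le (x n) (y n) lam).trans <|
      mul_le_mul (norm_apply_le_norm top_ne_zero x n)
        (norm_apply_le_norm top_ne_zero (x + lam • y) n) (norm_nonneg _) (norm_nonneg _)
  have hlim : ‖x‖ ^ 2 + re (lam * z) ≤ ‖x‖ * ‖x + lam • y‖ :=
    le_of_tendsto ((hx.pow 2).add ((continuous_re.tendsto _).comp (hz.const_mul lam)))
      (Eventually.of_forall hpt)
  nlinarith [norm_nonneg x, norm_nonneg (x + lam • y)]

lemma exists_norm_add_smul_lt [Nonempty ι] {x y : ℓ∞} {c : 𝕂} {u δ : ℝ} (hu : u < 0)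
    (hδ : 0 < δ) (h : ∀ n, ‖x‖ - δ < ‖x n‖ → re (c * (conj (x n) * y n)) < u) :
    ∃ lam : 𝕂, ‖x + lam • y‖ < ‖x‖ := by
  have hx : 0 < ‖x‖ := by
    by_contra! hx
    obtain ⟨i⟩ := ‹Nonempty ι›
    have h0 : x i = 0 := norm_le_zero_iff.1 ((norm_apply_le_norm top_ne_zero x i).trans hx)
    have := h i (by simp [h0]; linarith)
    simp only [h0, map_zero, zero_mul, mul_zero] at this
    linarith
  set C := ‖c‖ * ‖y‖
  obtain ⟨t, ⟨htδ, htu⟩, ht⟩ : ∃ t : ℝ, (t * C < δ / 2 ∧ t * C ^ 2 < -u) ∧ 0 < t := by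
    have : ∀ᶠ t in 𝓝 (0 : ℝ), t * C < δ / 2 ∧ t * C ^ 2 < -u :=
      (ContinuousAt.eventually_lt (by fun_prop) continuousAt_const (by simpa using half_pos hδ)).and
        (ContinuousAt.eventually_lt (by fun_prop) continuousAt_const (by simpa using hu))
    exact ((this.filter_mono nhdsWithin_le_nhds).and self_mem_nhdsWithin).exists (f := 𝓝[>] 0)
  have hcoord n : ‖(x + (t * c : 𝕂) • y) n‖ ≤ max √(‖x‖ ^ 2 + t * u) (‖x‖ - δ / 2) := by
    have hcy : ‖c * y n‖ ≤ C := by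
      rw [norm_mul]
      exact mul_le_mul_of_nonneg_left (norm_apply_le_norm top_ne_zero y n) (norm_nonneg c)
    have hxn := norm_apply_le_norm top_ne_zero x n
    change ‖x n + t * c * y n‖ ≤ _
    by_cases hn : ‖x‖ - δ < ‖x n‖
    · refine le_max_of_le_left (Real.le_sqrt_of_sq_le ?_)
      have hre := mul_lt_mul_of_pos_left (h n hn) ht
      have hxn2 : ‖x n‖ ^ 2 ≤ ‖x‖ ^ 2 := by gcongr
      have hcy2 : t ^ 2 * ‖c * y n‖ ^ 2 ≤ t * (t * C ^ 2) := by
        rw [← mul_assoc, ← sq]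
        gcongr
      rw [sq_norm_add_real_mul]
      nlinarith
    · refine le_max_of_le_right ?_
      calc ‖x n + t * c * y n‖ ≤ ‖x n‖ + t * ‖c * y n‖ := by
            simpa [mul_assoc, norm_mul, abs_of_pos ht] using norm_add_le (x n) (t * c * y n)
        _ ≤ ‖x‖ - δ / 2 := by nlinarith
  refine ⟨t * c, ?_⟩
  calc ‖x + (t * c : 𝕂) • y‖ ≤ max √(‖x‖ ^ 2 + t * u) (‖x‖ - δ / 2) :=
        norm_le_of_forall_le ((Real.sqrt_nonneg _).trans (le_max_left _ _)) hcoord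
    _ < ‖x‖ := max_lt ((Real.sqrt_lt' hx).2 (by nlinarith)) (by linarith)

end lp

theorem ellInfty_BJ_orthogonality {𝕂 : Type*} [RCLike 𝕂]
    (x y : lp (fun _ : ℕ => 𝕂) ∞) :
    (∀ lam : 𝕂, ‖x‖ ≤ ‖x + lam • y‖) ↔
      (0 : 𝕂) ∈ convexHull ℝ
        {z : 𝕂 | ∃ 𝒰 : Ultrafilter ℕ,
          Tendsto (fun n => ‖x n‖) (𝒰 : Filter ℕ) (nhds ‖x‖) ∧
          Tendsto (fun n => (starRingEnd 𝕂) (x n) * y n) (𝒰 : Filter ℕ) (nhds z)} := by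
  constructor
  · intro h
    by_contra h0
    rw [setOf_exists_ultrafilter_tendsto_eq] at h0
    have hbdd : ∀ᶠ n in comap (fun n => ‖x n‖) (𝓝 ‖x‖),
        conj (x n) * y n ∈ Metric.closedBall 0 (‖x‖ * ‖y‖) := .of_forall fun n => by
      simpa [norm_mul] using mul_le_mul (lp.norm_apply_le_norm top_ne_zero x n)
        (lp.norm_apply_le_norm top_ne_zero y n) (norm_nonneg _) (norm_nonneg _)
    obtain ⟨c, u, hu, hcS⟩ := exists_re_mul_lt_of_zero_notMem_convexHull
      ((isCompact_closedBall _ _).isCompact_setOf_mapClusterPt hbdd) h0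
    have hev : ∀ᶠ n in comap (fun n => ‖x n‖) (𝓝 ‖x‖), re (c * (conj (x n) * y n)) < u :=
      (isCompact_closedBall _ _).eventually_mem_of_forall_mapClusterPt (V := {z | re (c * z) < u})
        hbdd (isOpen_lt (by fun_prop) continuous_const) hcS
    obtain ⟨δ, hδ, hnear⟩ :=
      exists_pos_forall_of_eventually_comap_nhds (lp.norm_apply_le_norm top_ne_zero x) hev
    obtain ⟨lam, hlam⟩ := lp.exists_norm_add_smul_lt hu hδ hnear
    exact (h lam).not_gt hlam
  · intro h lam
    obtain ⟨z, ⟨𝒰, hx, hw⟩, hre⟩ := exists_re_mul_nonneg_of_zero_mem_convexHull h lam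
    exact lp.norm_le_norm_add_smul_of_tendsto hx hw hre
end

section
/- Let x = (x_n) and y = (y_n) be elements of real ℓ∞. If there exist N, M ∈ ℕ with |x_N| = ‖x‖ = |x_M| and x_N y_N ≥ 0 ≥ x_M y_M, then x ⊥_B y. -/
/-! A coordinate i with |x i| = ‖x‖ at which x i and (λ • y) i have the same sign already forces
‖x + λ • y‖ ≥ |x i + λ y i| ≥ |x i| = ‖x‖; the index N serves λ ≥ 0 and M serves λ ≤ 0. -/

open ENNReal

theorem abs_le_abs_add_of_mul_nonneg {α : Type*} [Ring α] [LinearOrder α] [IsStrictOrderedRing α]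
    {a b : α} (hab : 0 ≤ a * b) : |a| ≤ |a + b| :=
  calc |a| ≤ |a| + |b| := le_add_of_nonneg_right (abs_nonneg b)
    _ = |a + b| := ((abs_add_eq_add_abs_iff a b).2 (mul_nonneg_iff.1 hab)).symm

theorem lp.norm_le_norm_add_of_abs_apply_eq_norm {ι : Type*} {p : ℝ≥0∞} (hp : p ≠ 0)
    {x z : lp (fun _ : ι => ℝ) p} {i : ι} (hi : |x i| = ‖x‖) (hxz : 0 ≤ x i * z i) :
    ‖x‖ ≤ ‖x + z‖ :=
  calc ‖x‖ = |x i| := hi.symm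
    _ ≤ |x i + z i| := abs_le_abs_add_of_mul_nonneg hxz
    _ = ‖(x + z) i‖ := rfl
    _ ≤ ‖x + z‖ := lp.norm_apply_le_norm hp _ i

theorem ellInfty_real_orth_of_two_norming_indices
    (x y : lp (fun _ : ℕ => ℝ) ∞) (N M : ℕ)
    (hN : |x N| = ‖x‖) (hM : |x M| = ‖x‖)
    (hsign : x N * y N ≥ 0 ∧ 0 ≥ x M * y M) :
    ∀ lam : ℝ, ‖x‖ ≤ ‖x + lam • y‖ := by
  intro lam
  have hsmul (i : ℕ) : x i * (lam • y) i = lam * (x i * y i) := by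
    rw [lp.coeFn_smul, Pi.smul_apply, smul_eq_mul]; ring
  rcases le_total 0 lam with hlam | hlam
  · exact lp.norm_le_norm_add_of_abs_apply_eq_norm top_ne_zero hN
      ((hsmul N).symm ▸ mul_nonneg hlam hsign.1)
  · exact lp.norm_le_norm_add_of_abs_apply_eq_norm top_ne_zero hM
      ((hsmul M).symm ▸ mul_nonneg_of_nonpos_of_nonpos hlam hsign.2)
end

section
/- Let x = (x_n) and y = (y_n) be elements of real ℓ∞. If there exists a strictly increasing sequence (n_k) of natural numbers such that |x_{n_k}| → ‖x‖ and x_{n_k} y_{n_k} → 0 as k → ∞, then x ⊥_B y. -/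
open ENNReal Filter

set_option synthInstance.maxHeartbeats 400000 in
theorem ellInfty_real_orth_of_subseq
    (x y : lp (fun _ : ℕ => ℝ) ∞) (φ : ℕ → ℕ) (hφ : StrictMono φ)
    (hx : Tendsto (fun k => |x (φ k)|) atTop (nhds ‖x‖))
    (hxy : Tendsto (fun k => x (φ k) * y (φ k)) atTop (nhds 0)) :
    ∀ lam : ℝ, ‖x‖ ≤ ‖x + lam • y‖ := by
  intro lam
  rcases eq_or_lt_of_le (norm_nonneg x) with h0 | h0
  · rw [← h0]; exact norm_nonneg _
  -- key: |x(φk)| * |(x+lam•y)(φk)| → ‖x‖^2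
  have hcoe : ∀ n, (x + lam • y) n = x n + lam * y n := by
    intro n
    rw [lp.coeFn_add, Pi.add_apply, lp.coeFn_smul, Pi.smul_apply, smul_eq_mul]
  have h1 : Tendsto (fun k => |x (φ k)| * |(x + lam • y) (φ k)|) atTop
      (nhds (‖x‖ * ‖x‖)) := by
    have h2 : Tendsto (fun k => x (φ k) * x (φ k) + lam * (x (φ k) * y (φ k)))
        atTop (nhds (‖x‖ * ‖x‖ + lam * 0)) := by
      apply Tendsto.add
      · have := hx.mul hx
        have heq : (fun k => |x (φ k)| * |x (φ k)|) = fun k => x (φ k) * x (φ k) := by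
          funext k; rw [← abs_mul, abs_mul_self]
        rwa [heq] at this
      · exact hxy.const_mul lam
    rw [mul_zero, add_zero] at h2
    have h3 := h2.abs
    rw [abs_of_nonneg (mul_self_nonneg _)] at h3
    convert h3 using 2 with k
    rw [← abs_mul, hcoe]
    ring_nf
  have hbound : ∀ k, |x (φ k)| * |(x + lam • y) (φ k)| ≤ |x (φ k)| * ‖x + lam • y‖ := by
    intro k
    apply mul_le_mul_of_nonneg_left _ (abs_nonneg _)
    have := lp.norm_apply_le_norm (E := fun _ : ℕ => ℝ) top_ne_zero (x + lam • y) (φ k)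
    simpa using this
  have h4 : Tendsto (fun k => |x (φ k)| * ‖x + lam • y‖) atTop
      (nhds (‖x‖ * ‖x + lam • y‖)) := hx.mul_const _
  have h5 : ‖x‖ * ‖x‖ ≤ ‖x‖ * ‖x + lam • y‖ :=
    le_of_tendsto_of_tendsto' h1 h4 hbound
  exact le_of_mul_le_mul_left h5 h0
end

section
/- The nonzero left-symmetric points of ℓ∞ are exactly the nonzero scalar multiples of the standard unit vectors e_n, n ∈ ℕ. -/
open ENNReal

/-- Birkhoff-James orthogonality in `ℓ∞`. -/
def BJInf {𝕂 : Type*} [RCLike 𝕂] (x y : lp (fun _ : ℕ => 𝕂) ∞) : Prop :=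
  ∀ lam : 𝕂, ‖x‖ ≤ ‖x + lam • y‖

/-!
If `y n ≠ 0`, a small multiple of `y` lowers the peak of `c • e_n` at `n` while adding at most
`‖c‖ / 2` elsewhere, so `e_n ⊥ y` forces `y n = 0`; conversely `y n = 0` gives `y ⊥ e_n`, since
adding a multiple of `e_n` only changes the vanishing coordinate. Hence the multiples of `e_n` are
left-symmetric. For a left-symmetric `x` and `m ≠ n`, every coordinate of `x` survives in
`x + a • e_m` or in `x + b • e_n`, so `x ⊥ e_m` or `x ⊥ e_n`; by symmetry `x m = 0` or `x n = 0`.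
-/

namespace lp

variable {ι : Type*} {E : ι → Type*} [∀ i, NormedAddCommGroup (E i)]

theorem norm_le_norm_of_forall_norm_apply_le {f g : lp E ∞} (h : ∀ i, ‖f i‖ ≤ ‖g i‖) :
    ‖f‖ ≤ ‖g‖ :=
  norm_le_of_forall_le (norm_nonneg g) fun i => (h i).trans (norm_apply_le_norm top_ne_zero g i)

variable [DecidableEq ι]

theorem add_single_apply_of_ne {p : ℝ≥0∞} (f : lp E p) {n i : ι} (a : E n) (hi : i ≠ n) :
    (f + lp.single p n a) i = f i := by
  rw [coeFn_add, Pi.add_apply, lp.single_apply_ne _ _ _ hi, add_zero]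

theorem eq_single_of_forall_ne_apply_eq_zero {p : ℝ≥0∞} {f : lp E p} {n : ι}
    (h : ∀ m, m ≠ n → f m = 0) : f = lp.single p n (f n) := by
  ext i
  rcases eq_or_ne i n with rfl | hi
  · rw [lp.single_apply_self]
  · rw [lp.single_apply_ne _ _ _ hi, h i hi]

theorem norm_le_max_norm_add_single {m n : ι} (hmn : m ≠ n) (f : lp E ∞) (a : E m) (b : E n) :
    ‖f‖ ≤ max ‖f + lp.single ∞ m a‖ ‖f + lp.single ∞ n b‖ := by
  refine norm_le_of_forall_le (le_max_of_le_left (norm_nonneg _)) fun i => ?_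
  rcases eq_or_ne i m with rfl | him
  · rw [← add_single_apply_of_ne f b hmn]
    exact le_max_of_le_right (norm_apply_le_norm top_ne_zero _ i)
  · rw [← add_single_apply_of_ne f a him]
    exact le_max_of_le_left (norm_apply_le_norm top_ne_zero _ i)

section NormedSpace

variable {𝕜 : Type*} [NormedField 𝕜] [∀ i, NormedSpace 𝕜 (E i)]

theorem single_add_smul_apply_self {p : ℝ≥0∞} (n : ι) (c : E n) (a : 𝕜) (y : lp E p) :
    (lp.single p n c + a • y) n = c + a • y n := by
  rw [coeFn_add, coeFn_smul, Pi.add_apply, Pi.smul_apply, lp.single_apply_self]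

theorem norm_single_add_smul_le (n : ι) (c : E n) (a : 𝕜) (y : lp E ∞) :
    ‖lp.single ∞ n c + a • y‖ ≤ max ‖c + a • y n‖ (‖a‖ * ‖y‖) := by
  refine norm_le_of_forall_le (le_max_of_le_right (by positivity)) fun i => ?_
  rcases eq_or_ne i n with rfl | hi
  · exact le_max_of_le_left (by rw [single_add_smul_apply_self])
  · simp only [coeFn_add, coeFn_smul, Pi.add_apply, Pi.smul_apply, lp.single_apply_ne _ _ _ hi,
      zero_add]
    exact le_max_of_le_right ((norm_smul_le a (y i)).trans
      (mul_le_mul_of_nonneg_left (norm_apply_le_norm top_ne_zero y i) (norm_nonneg a)))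

end NormedSpace

theorem exists_norm_single_add_smul_lt {𝕂 : Type*} [RCLike 𝕂] {n : ι} {c : 𝕂} (hc : c ≠ 0)
    {y : lp (fun _ : ι => 𝕂) ∞} (hy : y n ≠ 0) :
    ∃ a : 𝕂, ‖lp.single ∞ n c + a • y‖ < ‖c‖ := by
  have hc' : 0 < ‖c‖ := norm_pos_iff.2 hc
  have hyn : 0 < ‖y n‖ := norm_pos_iff.2 hy
  have hyn_le : ‖y n‖ ≤ ‖y‖ := norm_apply_le_norm top_ne_zero y n
  have hy' : 0 < ‖y‖ := hyn.trans_le hyn_le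
  set t : ℝ := ‖y n‖ / (2 * ‖y‖) with ht_def
  have ht : 0 < t := div_pos hyn (by linarith)
  have ht_le : t ≤ 1 := (div_le_one (by linarith)).2 (by linarith)
  refine ⟨-(t * c / y n), ?_⟩
  have h_peak : ‖c + -(t * c / y n) • y n‖ = (1 - t) * ‖c‖ := by
    rw [smul_eq_mul, neg_mul, div_mul_cancel₀ _ hy, ← sub_eq_add_neg, ← one_sub_mul,
      ← RCLike.ofReal_one, ← RCLike.ofReal_sub, norm_mul, RCLike.norm_ofReal,
      abs_of_nonneg (by linarith)]
  have h_rest : ‖(-(t * c / y n) : 𝕂)‖ * ‖y‖ = ‖c‖ / 2 := by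
    rw [_root_.norm_neg, norm_div, norm_mul, RCLike.norm_ofReal, abs_of_pos ht, ht_def]
    field_simp
  calc _ ≤ _ := norm_single_add_smul_le n c _ y
    _ < ‖c‖ := by
      rw [h_peak, h_rest]
      exact max_lt (mul_lt_of_lt_one_left hc' (by linarith)) (by linarith)

end lp

section BirkhoffJames

variable {𝕂 : Type*} [RCLike 𝕂]

theorem bjInf_single_iff {n : ℕ} {c : 𝕂} (hc : c ≠ 0) {y : lp (fun _ : ℕ => 𝕂) ∞} :
    BJInf (lp.single ∞ n c) y ↔ y n = 0 := by
  constructor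
  · intro h
    by_contra hy
    obtain ⟨a, ha⟩ := lp.exists_norm_single_add_smul_lt hc hy
    exact (h a).not_gt (by rwa [lp.norm_single zero_lt_top])
  · intro hy a
    calc ‖(lp.single ∞ n c : lp (fun _ : ℕ => 𝕂) ∞)‖ =
        ‖(lp.single ∞ n c + a • y : lp (fun _ : ℕ => 𝕂) ∞) n‖ := by
          rw [lp.single_add_smul_apply_self, hy, smul_zero, add_zero, lp.norm_single zero_lt_top]
      _ ≤ _ := lp.norm_apply_le_norm top_ne_zero _ n

theorem bjInf_single_of_apply_eq_zero {y : lp (fun _ : ℕ => 𝕂) ∞} {n : ℕ} (c : 𝕂)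
    (hy : y n = 0) : BJInf y (lp.single ∞ n c) := fun a => by
  rw [← lp.single_smul]
  refine lp.norm_le_norm_of_forall_norm_apply_le fun i => ?_
  rcases eq_or_ne i n with rfl | hi
  · rw [hy, norm_zero]
    exact norm_nonneg _
  · rw [lp.add_single_apply_of_ne y _ hi]

theorem bjInf_single_or_bjInf_single {m n : ℕ} (hmn : m ≠ n) (x : lp (fun _ : ℕ => 𝕂) ∞)
    (c d : 𝕂) : BJInf x (lp.single ∞ m c) ∨ BJInf x (lp.single ∞ n d) := by
  by_contra h
  simp only [BJInf, not_or, not_forall, not_le] at h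
  obtain ⟨⟨a, ha⟩, ⟨b, hb⟩⟩ := h
  rw [← lp.single_smul] at ha hb
  exact (lp.norm_le_max_norm_add_single hmn x _ _).not_gt (max_lt ha hb)

end BirkhoffJames

theorem ellInfty_leftSymmetric_iff {𝕂 : Type*} [RCLike 𝕂]
    (x : lp (fun _ : ℕ => 𝕂) ∞) (hx : x ≠ 0) :
    (∀ y : lp (fun _ : ℕ => 𝕂) ∞, BJInf x y → BJInf y x) ↔
      ∃ (n : ℕ) (c : 𝕂), c ≠ 0 ∧ x = lp.single ∞ n c := by
  constructor
  · intro hsym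
    obtain ⟨n, hn⟩ : ∃ n, x n ≠ 0 := by
      by_contra! h
      exact hx (lp.ext (funext h))
    refine ⟨n, x n, hn, lp.eq_single_of_forall_ne_apply_eq_zero fun m hmn => ?_⟩
    rcases bjInf_single_or_bjInf_single hmn x 1 1 with h | h
    · exact (bjInf_single_iff one_ne_zero).1 (hsym _ h)
    · exact absurd ((bjInf_single_iff one_ne_zero).1 (hsym _ h)) hn
  · rintro ⟨n, c, hc, rfl⟩ y h
    exact bjInf_single_of_apply_eq_zero c ((bjInf_single_iff hc).1 h)
end

section
/- An element x = (x_n) ∈ ℓ∞ is a right-symmetric point if and only if |x_n| = ‖x‖ for every n ∈ ℕ. -/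
open ENNReal

/-!
If every coordinate of `x` has modulus `c = ‖x‖` and `‖x + u‖ = d < c`, then
`|x_n + u_n| ≤ d` forces `Re (u_n conj x_n) ≤ c d - c²`, so `t = (c - d) / c` gives
`|u_n + t x_n|² ≤ |u_n|² - (c - d)²` uniformly in `n`: `u + t x` is strictly shorter than `u`,
and `y` cannot be orthogonal to `x` when `u = λ y`.

If instead `|x_m| < c`, write `x_m = |x_m| σ` with `|σ| = 1` and take `y = -x` except `y_m = c σ`.
For `|μ - 1| ≤ 1` the coordinate `m` of `y + μ x` still has modulus at least `c`, while for
`|μ - 1| > 1` the coordinates `(μ - 1) x_n`, `n ≠ m`, already reach `c`; so `y ⊥ x`. But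
`x + s y` with `s = (c - |x_m|) / (2c)` has norm `(c + |x_m|) / 2 < c`.
-/

open RCLike in
theorem norm_add_ofReal_smul_sq_le {𝕜 E : Type*} [RCLike 𝕜] [NormedAddCommGroup E]
    [InnerProductSpace 𝕜 E] {b w : E} {d t : ℝ} (ht : 0 ≤ t) (hbw : ‖b + w‖ ≤ d) :
    ‖w + (t : 𝕜) • b‖ ^ 2 ≤ ‖w‖ ^ 2 + t ^ 2 * ‖b‖ ^ 2 - 2 * t * ‖b‖ * (‖b‖ - d) := by
  have hre : re (inner 𝕜 w b) ≤ ‖b‖ * d - ‖b‖ ^ 2 := by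
    have h := re_inner_le_norm (𝕜 := 𝕜) (b + w) b
    rw [inner_add_left, map_add, inner_self_eq_norm_sq] at h
    nlinarith [norm_nonneg b]
  rw [norm_add_sq (𝕜 := 𝕜), inner_smul_right, re_ofReal_mul, norm_smul, norm_ofReal,
    abs_of_nonneg ht]
  nlinarith

theorem lp.norm_le_of_forall_ne_le {α : Type*} {E : α → Type*} [∀ i, NormedAddCommGroup (E i)]
    {f : lp E ∞} {i : α} {C : ℝ} (hi : ‖f i‖ < ‖f‖) (hC : ∀ j ≠ i, ‖f j‖ ≤ C) : ‖f‖ ≤ C := by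
  have h : ‖f‖ ≤ max ‖f i‖ C := lp.norm_le_of_forall_le (le_max_of_le_left (norm_nonneg _))
    fun j => by
      rcases eq_or_ne j i with rfl | hj
      · exact le_max_left _ _
      · exact le_max_of_le_right (hC j hj)
  exact (le_max_iff.mp h).resolve_left hi.not_ge

theorem RCLike.exists_norm_eq_one_and_eq_norm_mul {𝕂 : Type*} [RCLike 𝕂] (a : 𝕂) :
    ∃ σ : 𝕂, ‖σ‖ = 1 ∧ a = ‖a‖ * σ := by
  rcases eq_or_ne a 0 with rfl | ha
  · exact ⟨1, by simp⟩
  · refine ⟨a / ‖a‖, by simp [ha], ?_⟩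
    rw [mul_div_cancel₀ _ (by simpa using ha)]

theorem lp.add_smul_apply {α 𝕂 : Type*} [RCLike 𝕂] {p : ℝ≥0∞} (x y : lp (fun _ : α => 𝕂) p)
    (μ : 𝕂) (n : α) : (x + μ • y) n = x n + μ * y n := by
  simp only [lp.coeFn_add, lp.coeFn_smul, Pi.add_apply, Pi.smul_apply, smul_eq_mul]

section LInfty

variable {𝕂 : Type*} [RCLike 𝕂]

theorem BJInf.smul_left {x y : lp (fun _ : ℕ => 𝕂) ∞} (h : BJInf y x) (a : 𝕂) :
    BJInf (a • y) x := by
  intro μ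
  rcases eq_or_ne a 0 with rfl | ha
  · simp
  · calc ‖a • y‖ ≤ ‖a‖ * ‖y + (μ / a) • x‖ := by
          rw [norm_smul]; exact mul_le_mul_of_nonneg_left (h _) (norm_nonneg a)
      _ = ‖a • y + μ • x‖ := by
          rw [← norm_smul, smul_add, smul_smul, mul_div_cancel₀ _ ha]

theorem exists_norm_add_smul_lt_of_norm_add_lt {x u : lp (fun _ : ℕ => 𝕂) ∞}
    (hx : ∀ n, ‖x n‖ = ‖x‖) (hu : ‖x + u‖ < ‖x‖) : ∃ t : 𝕂, ‖u + t • x‖ < ‖u‖ := by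
  set c := ‖x‖
  set d := ‖x + u‖
  have hc : 0 < c := (norm_nonneg _).trans_lt hu
  have hu0 : 0 < ‖u‖ := norm_pos_iff.mpr fun h0 => hu.ne (by simp [d, c, h0])
  set t := (c - d) / c
  have htc : t * c = c - d := div_mul_cancel₀ _ hc.ne'
  refine ⟨t, ?_⟩
  calc ‖u + (t : 𝕂) • x‖ ≤ √(‖u‖ ^ 2 - (c - d) ^ 2) :=
        lp.norm_le_of_forall_le (Real.sqrt_nonneg _) fun n => by
          refine Real.le_sqrt_of_sq_le ?_
          have hd : ‖x n + u n‖ ≤ d := by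
            simpa using lp.norm_apply_le_norm top_ne_zero (x + u) n
          calc ‖(u + (t : 𝕂) • x) n‖ ^ 2
              ≤ ‖u n‖ ^ 2 + t ^ 2 * c ^ 2 - 2 * t * c * (c - d) := by
                rw [lp.add_smul_apply, ← smul_eq_mul, ← hx n]
                exact norm_add_ofReal_smul_sq_le (by positivity) hd
            _ = ‖u n‖ ^ 2 - (c - d) ^ 2 := by linear_combination (t * c - (c - d)) * htc
            _ ≤ ‖u‖ ^ 2 - (c - d) ^ 2 := by gcongr; exact lp.norm_apply_le_norm top_ne_zero u n
    _ < ‖u‖ := by rw [Real.sqrt_lt' hu0]; nlinarith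

theorem bjInf_of_forall_norm_apply_eq {x y : lp (fun _ : ℕ => 𝕂) ∞}
    (hx : ∀ n, ‖x n‖ = ‖x‖) (hyx : BJInf y x) : BJInf x y := by
  intro a
  by_contra! h
  obtain ⟨t, ht⟩ := exists_norm_add_smul_lt_of_norm_add_lt hx h
  exact ht.not_ge (hyx.smul_left a t)

noncomputable def negUpdate (x : lp (fun _ : ℕ => 𝕂) ∞) (m : ℕ) (v : 𝕂) :
    lp (fun _ : ℕ => 𝕂) ∞ :=
  lp.single ∞ m (x m + v) - x

theorem negUpdate_apply_self (x : lp (fun _ : ℕ => 𝕂) ∞) (m : ℕ) (v : 𝕂) :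
    negUpdate x m v m = v := by
  simp [negUpdate]

theorem negUpdate_apply_of_ne (x : lp (fun _ : ℕ => 𝕂) ∞) {m n : ℕ} (v : 𝕂) (h : n ≠ m) :
    negUpdate x m v n = -x n := by
  simp [negUpdate, Pi.single_eq_of_ne h]

section Witness

variable {x : lp (fun _ : ℕ => 𝕂) ∞} {m : ℕ} {σ : 𝕂}

theorem bjInf_negUpdate (hσ : ‖σ‖ = 1) (hxm : x m = ‖x m‖ * σ) (hm : ‖x m‖ < ‖x‖) :
    BJInf (negUpdate x m (‖x‖ * σ)) x := by
  set y := negUpdate x m (‖x‖ * σ)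
  have hy : ‖y‖ ≤ ‖x‖ := lp.norm_le_of_forall_le (norm_nonneg _) fun n => by
    rcases eq_or_ne n m with rfl | hn
    · simp [y, negUpdate_apply_self, hσ]
    · simpa [y, negUpdate_apply_of_ne _ _ hn] using lp.norm_apply_le_norm top_ne_zero x n
  intro μ
  refine hy.trans ?_
  rcases le_or_gt ‖μ - 1‖ 1 with hμ | hμ
  · have hym : (y + μ • x) m = ((‖x m‖ + ‖x‖ : ℝ) : 𝕂) * σ + (μ - 1) * x m := by
      rw [lp.add_smul_apply, negUpdate_apply_self]
      push_cast
      linear_combination hxm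
    calc ‖x‖ ≤ (‖x m‖ + ‖x‖) - ‖μ - 1‖ * ‖x m‖ := by nlinarith [norm_nonneg (x m)]
      _ ≤ ‖(y + μ • x) m‖ := by
        have h := norm_sub_le_norm_add (((‖x m‖ + ‖x‖ : ℝ) : 𝕂) * σ) ((μ - 1) * x m)
        rw [norm_mul, norm_mul, hσ, mul_one, RCLike.norm_ofReal,
          abs_of_nonneg (by positivity)] at h
        rwa [hym]
      _ ≤ ‖y + μ • x‖ := lp.norm_apply_le_norm top_ne_zero _ m
  · refine lp.norm_le_of_forall_ne_le hm fun n hn => ?_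
    calc ‖x n‖ ≤ ‖μ - 1‖ * ‖x n‖ := le_mul_of_one_le_left (norm_nonneg _) hμ.le
      _ = ‖(y + μ • x) n‖ := by
        rw [lp.add_smul_apply, negUpdate_apply_of_ne _ _ hn, ← norm_mul]
        ring_nf
      _ ≤ ‖y + μ • x‖ := lp.norm_apply_le_norm top_ne_zero _ n

theorem not_bjInf_negUpdate (hσ : ‖σ‖ = 1) (hxm : x m = ‖x m‖ * σ) (hm : ‖x m‖ < ‖x‖) :
    ¬ BJInf x (negUpdate x m (‖x‖ * σ)) := by
  intro h
  set y := negUpdate x m (‖x‖ * σ)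
  set c := ‖x‖
  set a := ‖x m‖
  have hc : 0 < c := (norm_nonneg _).trans_lt hm
  set s : ℝ := (c - a) / (2 * c)
  have hsc : s * c = (c - a) / 2 := by simp only [s]; field_simp
  have hs1 : s ≤ 1 := by
    rw [div_le_one (by positivity)]
    linarith [norm_nonneg (x m)]
  have hxy : ‖x + (s : 𝕂) • y‖ ≤ (c + a) / 2 :=
    lp.norm_le_of_forall_le (by positivity) fun n => by
      rcases eq_or_ne n m with rfl | hn
      · have e : (x + (s : 𝕂) • y) n = ((a + s * c : ℝ) : 𝕂) * σ := by
          rw [lp.add_smul_apply, negUpdate_apply_self, hxm]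
          push_cast
          ring
        rw [e, norm_mul, hσ, RCLike.norm_ofReal, abs_of_nonneg (by positivity)]
        linarith
      · have e : (x + (s : 𝕂) • y) n = ((1 - s : ℝ) : 𝕂) * x n := by
          rw [lp.add_smul_apply, negUpdate_apply_of_ne _ _ hn]
          push_cast
          ring
        rw [e, norm_mul, RCLike.norm_ofReal, abs_of_nonneg (by linarith)]
        nlinarith [lp.norm_apply_le_norm top_ne_zero x n]
  linarith [h s]

end Witness

end LInfty

theorem ellInfty_rightSymmetric_iff {𝕂 : Type*} [RCLike 𝕂]
    (x : lp (fun _ : ℕ => 𝕂) ∞) :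
    (∀ y : lp (fun _ : ℕ => 𝕂) ∞, BJInf y x → BJInf x y) ↔
      ∀ n : ℕ, ‖x n‖ = ‖x‖ := by
  refine ⟨fun hsym m => ?_, fun hx y => bjInf_of_forall_norm_apply_eq hx⟩
  by_contra hne
  have hm : ‖x m‖ < ‖x‖ := (lp.norm_apply_le_norm top_ne_zero x m).lt_of_ne hne
  obtain ⟨σ, hσ, hxm⟩ := RCLike.exists_norm_eq_one_and_eq_norm_mul (x m)
  exact not_bjInf_negUpdate hσ hxm hm (hsym _ (bjInf_negUpdate hσ hxm hm))
end

section
/- Let a = (a_n), b = (b_n) ∈ ℓ₁. Then a ⊥_B b if and only if |Σ_{n} conj(sgn(a_n)) b_n| ≤ Σ_{n : a_n = 0} |b_n|. -/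
open ENNReal

/-- The sign of a scalar: `z/|z|` for `z ≠ 0` and `0` for `z = 0`. -/
noncomputable def sgn {𝕂 : Type*} [RCLike 𝕂] (z : 𝕂) : 𝕂 :=
  if z = 0 then 0 else z / (‖z‖ : 𝕂)

/-!
The `ℓ¹` norm has at `a`, in the direction `w`, the one-sided derivative
`D(a, w) = Σ re (conj (sgn aₙ) wₙ) + Σ_{aₙ = 0} |wₙ|`: termwise this is the derivative of
`t ↦ |aₙ + t wₙ|` at `0⁺`, the error being `O(t²)` where `aₙ ≠ 0`, and dominated convergence
(with bound `|wₙ|`) exchanges limit and sum. Termwise `re (conj (sgn z) (z + w)) ≤ |z + w|` also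
gives `D(a, w) ≤ ‖a + w‖ - ‖a‖`, so
`a ⊥_B b` iff `D(a, λ b) = re (λ S) + |λ| T ≥ 0` for all `λ`, where `S = Σ conj (sgn aₙ) bₙ` and
`T = Σ_{aₙ = 0} |bₙ|`. Taking `λ = -conj S` shows that this holds iff `|S| ≤ T`.
-/

open Filter Topology RCLike ComplexConjugate

section Scalar

variable {𝕂 : Type*} [RCLike 𝕂]

lemma sgn_zero : sgn (0 : 𝕂) = 0 := by simp [sgn]

lemma norm_sgn_le (z : 𝕂) : ‖sgn z‖ ≤ 1 := by
  unfold sgn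
  split_ifs with h
  · simp
  · rw [norm_div, norm_ofReal, abs_norm, div_self (norm_ne_zero_iff.2 h)]

lemma conj_sgn_mul_self (z : 𝕂) : conj (sgn z) * z = (‖z‖ : 𝕂) := by
  unfold sgn
  split_ifs with h
  · simp [h]
  · rw [map_div₀, conj_ofReal, div_mul_eq_mul_div, mul_comm, mul_conj, sq, mul_div_assoc,
      div_self (ofReal_ne_zero.2 (norm_ne_zero_iff.2 h)), mul_one]

lemma norm_conj_sgn_mul_le (z w : 𝕂) : ‖conj (sgn z) * w‖ ≤ ‖w‖ := by
  rw [norm_mul, norm_conj]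
  exact mul_le_of_le_one_left (norm_nonneg w) (norm_sgn_le z)

noncomputable def normDirDeriv (z w : 𝕂) : ℝ :=
  re (conj (sgn z) * w) + if z = 0 then ‖w‖ else 0

lemma abs_normDirDeriv_le (z w : 𝕂) : |normDirDeriv z w| ≤ ‖w‖ := by
  unfold normDirDeriv
  split_ifs with h
  · simp [h, sgn_zero]
  · simpa using (abs_re_le_norm _).trans (norm_conj_sgn_mul_le z w)

lemma normDirDeriv_real_mul (z w : 𝕂) {t : ℝ} (ht : 0 ≤ t) :
    normDirDeriv z (t * w) = t * normDirDeriv z w := by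
  unfold normDirDeriv
  rw [mul_left_comm, re_ofReal_mul, norm_mul, norm_ofReal, abs_of_nonneg ht]
  split_ifs <;> ring

lemma normDirDeriv_le_norm_add_sub (z w : 𝕂) : normDirDeriv z w ≤ ‖z + w‖ - ‖z‖ := by
  unfold normDirDeriv
  split_ifs with h
  · simp [h, sgn_zero]
  · have hre : re (conj (sgn z) * (z + w)) = ‖z‖ + re (conj (sgn z) * w) := by
      rw [mul_add, map_add, conj_sgn_mul_self, ofReal_re]
    have := (re_le_norm _).trans (norm_conj_sgn_mul_le z (z + w))
    linarith

/-- The quadratic error term is `0` when `z = 0`, by the convention `x / 0 = 0`. -/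
lemma norm_add_sub_le_normDirDeriv_add (z w : 𝕂) :
    ‖z + w‖ - ‖z‖ ≤ normDirDeriv z w + ‖w‖ ^ 2 / (2 * ‖z‖) := by
  rcases eq_or_ne z 0 with rfl | hz
  · simp [normDirDeriv, sgn_zero]
  have hu : 0 < ‖z‖ := norm_pos_iff.2 hz
  have hre : re (conj (sgn z) * w) * ‖z‖ = re (conj z * w) := by
    rw [sgn, if_neg hz, map_div₀, conj_ofReal, div_mul_eq_mul_div, div_eq_mul_inv,
      ← ofReal_inv, re_mul_ofReal, inv_mul_cancel_right₀ hu.ne']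
  have hsq : ‖z + w‖ ^ 2 = ‖z‖ ^ 2 + 2 * re (conj z * w) + ‖w‖ ^ 2 := by
    rw [norm_add_sq (𝕜 := 𝕂), inner_apply, mul_comm w]
  -- AM-GM: `2 ‖z‖ ‖z + w‖ ≤ ‖z‖² + ‖z + w‖²`
  have hamgm : ‖z‖ * ‖z + w‖ ≤ ‖z‖ * (‖z‖ + re (conj (sgn z) * w) + ‖w‖ ^ 2 / (2 * ‖z‖)) := by
    have : ‖z‖ * (‖w‖ ^ 2 / (2 * ‖z‖)) = ‖w‖ ^ 2 / 2 := by field_simp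
    nlinarith [sq_nonneg (‖z‖ - ‖z + w‖)]
  rw [normDirDeriv, if_neg hz, add_zero]
  linarith [le_of_mul_le_mul_left hamgm hu]

lemma tendsto_norm_add_mul_sub_div (z w : 𝕂) :
    Tendsto (fun t : ℝ => (‖z + t * w‖ - ‖z‖) / t) (𝓝[>] 0) (𝓝 (normDirDeriv z w)) := by
  have hupper : Tendsto (fun t : ℝ => normDirDeriv z w + t * (‖w‖ ^ 2 / (2 * ‖z‖)))
      (𝓝[>] 0) (𝓝 (normDirDeriv z w)) := by
    simpa using (tendsto_const_nhds.add (tendsto_id.mul_const (‖w‖ ^ 2 / (2 * ‖z‖)))).mono_left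
      (nhdsWithin_le_nhds (a := (0 : ℝ)))
  refine tendsto_of_tendsto_of_tendsto_of_le_of_le' tendsto_const_nhds hupper ?_ ?_
  all_goals filter_upwards [self_mem_nhdsWithin] with t (ht : 0 < t)
  · rw [le_div_iff₀ ht, mul_comm, ← normDirDeriv_real_mul z w ht.le]
    exact normDirDeriv_le_norm_add_sub z _
  · rw [div_le_iff₀ ht]
    calc ‖z + t * w‖ - ‖z‖ ≤ normDirDeriv z (t * w) + ‖(t : 𝕂) * w‖ ^ 2 / (2 * ‖z‖) :=
          norm_add_sub_le_normDirDeriv_add z _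
      _ = (normDirDeriv z w + t * (‖w‖ ^ 2 / (2 * ‖z‖))) * t := by
          rw [normDirDeriv_real_mul z w ht.le, norm_mul, norm_ofReal, abs_of_pos ht]
          ring

lemma forall_nonneg_re_mul_add_norm_mul_iff (S : 𝕂) (T : ℝ) :
    (∀ c : 𝕂, 0 ≤ re (c * S) + ‖c‖ * T) ↔ ‖S‖ ≤ T := by
  refine ⟨fun h => ?_, fun h c => ?_⟩
  · rcases eq_or_ne S 0 with rfl | hS
    · simpa using h 1
    · have h' := h (-conj S)
      rw [neg_mul, RCLike.conj_mul, map_neg, ← RCLike.ofReal_pow, ofReal_re, norm_neg,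
        norm_conj] at h'
      nlinarith [norm_pos_iff.2 hS]
  · have hre := neg_le_of_abs_le (abs_re_le_norm (c * S))
    rw [norm_mul] at hre
    nlinarith [norm_nonneg c]

end Scalar

section L1

variable {α : Type*} {𝕂 : Type*} [RCLike 𝕂]

lemma lp.hasSum_norm_one {E : α → Type*} [∀ i, NormedAddCommGroup (E i)] (f : lp E 1) :
    HasSum (fun i => ‖f i‖) ‖f‖ := by
  simpa using lp.hasSum_norm (p := 1) (by norm_num) f

noncomputable def l1NormDirDeriv (f g : lp (fun _ : α => 𝕂) 1) : ℝ :=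
  ∑' i, normDirDeriv (f i) (g i)

lemma summable_normDirDeriv (f g : lp (fun _ : α => 𝕂) 1) :
    Summable fun i => normDirDeriv (f i) (g i) :=
  (lp.hasSum_norm_one g).summable.of_norm_bounded fun _ => abs_normDirDeriv_le _ _

lemma l1NormDirDeriv_le_norm_add_sub (f g : lp (fun _ : α => 𝕂) 1) :
    l1NormDirDeriv f g ≤ ‖f + g‖ - ‖f‖ :=
  hasSum_le (fun i => normDirDeriv_le_norm_add_sub (f i) (g i))
    (summable_normDirDeriv f g).hasSum
    ((lp.hasSum_norm_one (f + g)).sub (lp.hasSum_norm_one f))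

lemma tendsto_norm_add_smul_sub_div (f g : lp (fun _ : α => 𝕂) 1) :
    Tendsto (fun t : ℝ => (‖f + (t : 𝕂) • g‖ - ‖f‖) / t) (𝓝[>] 0)
      (𝓝 (l1NormDirDeriv f g)) := by
  have hquot (t : ℝ) :
      (‖f + (t : 𝕂) • g‖ - ‖f‖) / t = ∑' i, (‖f i + t * g i‖ - ‖f i‖) / t :=
    (((lp.hasSum_norm_one _).sub (lp.hasSum_norm_one f)).div_const t).tsum_eq.symm
  simp_rw [hquot]
  refine tendsto_tsum_of_dominated_convergence (lp.hasSum_norm_one g).summable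
    (fun i => tendsto_norm_add_mul_sub_div (f i) (g i)) ?_
  filter_upwards [self_mem_nhdsWithin] with t (ht : 0 < t) i
  rw [norm_div, Real.norm_eq_abs, Real.norm_eq_abs, abs_of_pos ht, div_le_iff₀ ht]
  simpa [norm_mul, abs_of_pos ht, mul_comm] using abs_norm_sub_norm_le (f i + t * g i) (f i)

lemma forall_norm_le_norm_add_smul_iff (f g : lp (fun _ : α => 𝕂) 1) :
    (∀ c : 𝕂, ‖f‖ ≤ ‖f + c • g‖) ↔ ∀ c : 𝕂, 0 ≤ l1NormDirDeriv f (c • g) := by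
  refine ⟨fun h c => ?_,
    fun h c => sub_nonneg.1 ((h c).trans (l1NormDirDeriv_le_norm_add_sub f _))⟩
  refine ge_of_tendsto (tendsto_norm_add_smul_sub_div f (c • g)) ?_
  filter_upwards [self_mem_nhdsWithin] with t (ht : 0 < t)
  rw [smul_smul]
  exact div_nonneg (sub_nonneg.2 (h _)) ht.le

lemma l1NormDirDeriv_smul_right (f g : lp (fun _ : α => 𝕂) 1) (c : 𝕂) :
    l1NormDirDeriv f (c • g) =
      re (c * ∑' i, conj (sgn (f i)) * g i) + ‖c‖ * ∑' i : {i // f i = 0}, ‖g i‖ := by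
  have hg := (lp.hasSum_norm_one g).summable
  have hS : Summable fun i => conj (sgn (f i)) * g i :=
    hg.of_norm_bounded fun _ => norm_conj_sgn_mul_le _ _
  have hT : Summable ({i | f i = 0}.indicator fun i => ‖g i‖) := hg.indicator _
  have hpt (i : α) : normDirDeriv (f i) ((c • g) i) =
      re (c * (conj (sgn (f i)) * g i)) + ‖c‖ * {i | f i = 0}.indicator (fun i => ‖g i‖) i := by
    simp only [normDirDeriv, lp.coeFn_smul, Pi.smul_apply, smul_eq_mul, Set.indicator_apply,
      Set.mem_ofPred_eq, norm_mul, mul_left_comm c]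
    split_ifs <;> simp
  have hsub : ∑' i : {i // f i = 0}, ‖g i‖ = ∑' i, {i | f i = 0}.indicator (fun i => ‖g i‖) i :=
    tsum_subtype {i | f i = 0} fun i => ‖g i‖
  rw [hsub, l1NormDirDeriv, funext hpt]
  exact ((hasSum_re _ (hS.hasSum.mul_left c)).add (hT.hasSum.mul_left ‖c‖)).tsum_eq

end L1

theorem ell1_BJ_orthogonality {𝕂 : Type*} [RCLike 𝕂]
    (a b : lp (fun _ : ℕ => 𝕂) 1) :
    (∀ lam : 𝕂, ‖a‖ ≤ ‖a + lam • b‖) ↔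
      ‖∑' n : ℕ, (starRingEnd 𝕂) (sgn (a n)) * b n‖ ≤
        ∑' n : {n : ℕ // a n = 0}, ‖b (n : ℕ)‖ := by
  simp_rw [forall_norm_le_norm_add_smul_iff, l1NormDirDeriv_smul_right]
  exact forall_nonneg_re_mul_add_norm_mul_iff _ _
end
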